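/- Let Ω ⊆ ℝ^m with 0 ∉ Ω, and let h ∈ ℝ^m satisfy h·ω > 0 for every nonzero ω ∈ cl cone(Ω). Define Ω' := {ω/(h·ω) : ω ∈ Ω}. Then every extreme ray r of cl cone(Ω) with h·r = 1 is an extreme point of cl conv(Ω'). -/

import Mathlib

/-! Normalizing by the positive functional `f ω = ∑ i, h i * ω i` sends every point `x` of
`cone Ω` with `f x > 0` to `(f x)⁻¹ • x ∈ conv Ω'`; since normalization is continuous on the
open half-space `{f > 0}` and fixes `r`, the point `r` of `cl cone Ω` lies in `cl conv Ω'`.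
That set sits inside the closed cone and inside the slice `{f = 1}`. So if `r = a x + b y` with
`x, y ∈ cl conv Ω'` and `a, b > 0`, extremality of the ray makes `a x` a multiple `c r`,
evaluating `f` gives `c = a`, and hence `x = r`. -/

noncomputable section

/-- The conical hull of a set: all finite nonnegative combinations of its elements. -/
def coneHull {E : Type*} [AddCommMonoid E] [Module ℝ E] (Ω : Set E) : Set E :=
  {y | ∃ (k : ℕ) (c : Fin k → ℝ) (v : Fin k → E),
    (∀ i, 0 ≤ c i) ∧ (∀ i, v i ∈ Ω) ∧ y = ∑ i, c i • v i}

/-- `r` is an extreme ray of the convex cone `K`. -/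
def IsExtremeRay {E : Type*} [AddCommMonoid E] [Module ℝ E] (K : Set E) (r : E) : Prop :=
  r ≠ 0 ∧ r ∈ K ∧ ∀ u v : E, u ∈ K → v ∈ K → r = u + v →
    (∃ c : ℝ, 0 ≤ c ∧ u = c • r) ∧ (∃ c : ℝ, 0 ≤ c ∧ v = c • r)

open Set

section

variable {E : Type*} [AddCommGroup E] [Module ℝ E]

theorem coneHull_eq_hull (Ω : Set E) : coneHull Ω = PointedCone.hull ℝ Ω := by
  ext y
  rw [SetLike.mem_coe, Submodule.mem_span_set']
  constructor
  · rintro ⟨k, c, v, hc, hv, rfl⟩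
    exact ⟨k, fun i => ⟨c i, hc i⟩, fun i => ⟨v i, hv i⟩, rfl⟩
  · rintro ⟨k, c, v, rfl⟩
    exact ⟨k, fun i => c i, fun i => v i, fun i => (c i).2, fun i => (v i).2, rfl⟩

theorem subset_coneHull (Ω : Set E) : Ω ⊆ coneHull Ω :=
  coneHull_eq_hull Ω ▸ PointedCone.subset_hull

theorem inv_smul_mem_convexHull_of_mem_coneHull {f : E →ₗ[ℝ] ℝ} {Ω : Set E}
    (hf : ∀ ω ∈ Ω, 0 < f ω) {x : E} (hx : x ∈ coneHull Ω) (hfx : 0 < f x) :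
    (f x)⁻¹ • x ∈ convexHull ℝ ((fun ω => (f ω)⁻¹ • ω) '' Ω) := by
  obtain ⟨k, c, v, hc, hv, rfl⟩ := hx
  have hfsum : f (∑ i, c i • v i) = ∑ i, c i * f (v i) := by simp
  -- reweighting by `f (v i)` turns the conical combination into a convex one of normalized points
  have hcenter : Finset.univ.centerMass (fun i => c i * f (v i)) (fun i => (f (v i))⁻¹ • v i) =
      (f (∑ i, c i • v i))⁻¹ • ∑ i, c i • v i := by
    rw [Finset.centerMass, hfsum]
    congr 1
    refine Finset.sum_congr rfl fun i _ => ?_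
    rw [smul_smul, mul_assoc, mul_inv_cancel₀ (hf (v i) (hv i)).ne', mul_one]
  rw [← hcenter]
  exact Finset.centerMass_mem_convexHull _ (fun i _ => mul_nonneg (hc i) (hf (v i) (hv i)).le)
    (hfsum ▸ hfx) fun i _ => mem_image_of_mem _ (hv i)

theorem IsExtremeRay.mem_extremePoints {K : PointedCone ℝ E} {S : Set E} {f : E →ₗ[ℝ] ℝ}
    {r : E} (hr : IsExtremeRay (K : Set E) r) (hrS : r ∈ S) (hSK : S ⊆ K)
    (hS : S ⊆ f ⁻¹' {1}) : r ∈ extremePoints ℝ S := by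
  refine ⟨hrS, fun x hx y hy ⟨a, b, ha, hb, _, hxy⟩ => ?_⟩
  obtain ⟨⟨c, -, hc⟩, -⟩ :=
    hr.2.2 (a • x) (b • y) (K.smul_mem ha.le (hSK hx)) (K.smul_mem hb.le (hSK hy)) hxy.symm
  have hca : c = a := by
    simpa [show f x = 1 from hS hx, show f r = 1 from hS hrS] using congrArg f hc.symm
  exact smul_right_injective E ha.ne' (hca ▸ hc)

variable [TopologicalSpace E] [ContinuousSMul ℝ E]

theorem mem_closure_convexHull_of_mem_closure_coneHull {f : E →L[ℝ] ℝ} {Ω : Set E}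
    (hf : ∀ ω ∈ Ω, 0 < f ω) {r : E} (hr : r ∈ closure (coneHull Ω)) (hr1 : f r = 1) :
    r ∈ closure (convexHull ℝ ((fun ω => (f ω)⁻¹ • ω) '' Ω)) := by
  set U := {x | 0 < f x}
  have hU : IsOpen U := isOpen_lt continuous_const f.continuous
  have hrU : r ∈ U := by simp [U, hr1]
  have hnormalize : ContinuousOn (fun x => (f x)⁻¹ • x) U :=
    (f.continuous.continuousOn.inv₀ fun x hx => ne_of_gt hx).smul continuousOn_id
  have hr' : r ∈ closure (U ∩ coneHull Ω) := hU.inter_closure ⟨hrU, hr⟩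
  have := ((hnormalize r hrU).mono inter_subset_left).mem_closure_image hr'
  rw [hr1, inv_one, one_smul] at this
  exact closure_mono (image_subset_iff.2 fun x hx =>
    inv_smul_mem_convexHull_of_mem_coneHull hf hx.2 hx.1) this

theorem IsExtremeRay.mem_extremePoints_closure_convexHull [ContinuousAdd E] {f : E →L[ℝ] ℝ}
    {Ω : Set E} (hf : ∀ ω ∈ Ω, 0 < f ω) {r : E} (hr : IsExtremeRay (closure (coneHull Ω)) r)
    (hr1 : f r = 1) :
    r ∈ extremePoints ℝ (closure (convexHull ℝ ((fun ω => (f ω)⁻¹ • ω) '' Ω))) := by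
  have hr_mem := mem_closure_convexHull_of_mem_closure_coneHull hf hr.2.1 hr1
  rw [coneHull_eq_hull] at hr
  have hnormalized_mem_hull : (fun ω => (f ω)⁻¹ • ω) '' Ω ⊆ PointedCone.hull ℝ Ω := by
    rintro _ ⟨ω, hω, rfl⟩
    exact PointedCone.smul_mem _ (inv_nonneg.2 (hf ω hω).le) (PointedCone.subset_hull hω)
  have hslice : (fun ω => (f ω)⁻¹ • ω) '' Ω ⊆ f ⁻¹' {1} := by
    rintro _ ⟨ω, hω, rfl⟩
    simp [(hf ω hω).ne']
  refine hr.mem_extremePoints (K := (PointedCone.hull ℝ Ω).closure) (f := f.toLinearMap)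
    hr_mem ?_ ?_
  · exact closure_mono (convexHull_min hnormalized_mem_hull (PointedCone.convex _))
  · exact closure_minimal (convexHull_min hslice ((convex_singleton 1).linear_preimage _))
      (isClosed_singleton.preimage f.continuous)

end

/-- Claim: every extreme ray r of cl cone(Ω) with h·r = 1 is an extreme point of
cl conv(Ω'), where Ω' normalizes Ω. -/
theorem extremeRay_is_extremePoint_of_slice {m : ℕ} (Ω : Set (Fin m → ℝ))
    (h0 : (0 : Fin m → ℝ) ∉ Ω) (h : Fin m → ℝ)
    (hpos : ∀ ω ∈ closure (coneHull Ω), ω ≠ 0 → 0 < ∑ i, h i * ω i)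
    (r : Fin m → ℝ) (hr : IsExtremeRay (closure (coneHull Ω)) r)
    (hr1 : ∑ i, h i * r i = 1) :
    r ∈ Set.extremePoints ℝ
      (closure (convexHull ℝ ((fun ω => (∑ i, h i * ω i)⁻¹ • ω) '' Ω))) := by
  let f : (Fin m → ℝ) →L[ℝ] ℝ := LinearMap.toContinuousLinearMap (dotProductBilin ℝ ℝ h)
  have hf : ∀ ω ∈ Ω, 0 < f ω := fun ω hω =>
    hpos ω (subset_closure (subset_coneHull Ω hω)) (ne_of_mem_of_not_mem hω h0)
  exact hr.mem_extremePoints_closure_convexHull hf hr1
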